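/- arXiv:2006.03016 — 3 statements merged into one kernel-verified Lean document; each statement's English description precedes it below -/
import Mathlib

section
/- For every integer x ≥ 2, the function g(x) := (ln x − ln(x−1))/(ln(x+1) − ln x) is strictly decreasing on integers x ≥ 2 and satisfies g(x) ≤ g(2) < 2. -/
/-!
Write `t = 1 / (2a + 1)`, so that `log (a + 1) - log a = log ((1 + t) / (1 - t)) = 2 (t + t³/3 + ⋯)`
lies between `2t` and `2t / (1 - t²)`. For the consecutive gaps `c, a, b` at `r - 1, r, r + 1`,
monotonicity of `g` is `a² < b c`, and with these bounds it reduces to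
`(4y + 1)(4y - 3) < 16y²` for `y = r (r + 1)`. Finally `g 2 < 2` is `8 < 9` after exponentiating.
-/

open Real

lemma one_add_inv_div_one_sub_inv {a : ℝ} (ha : 0 < a) :
    (1 + (2 * a + 1)⁻¹) / (1 - (2 * a + 1)⁻¹) = (a + 1) / a := by
  have h : 1 - (2 * a + 1)⁻¹ = 2 * a / (2 * a + 1) := by field_simp; ring
  rw [h]
  field_simp
  ring

lemma two_div_le_log_add_one_sub_log {a : ℝ} (ha : 0 < a) :
    2 / (2 * a + 1) ≤ log (a + 1) - log a := by
  have h := sum_range_le_log_div (x := (2 * a + 1)⁻¹) (by positivity)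
    (inv_lt_one_of_one_lt₀ (by linarith)) 1
  rw [one_add_inv_div_one_sub_inv ha, log_div (by positivity) ha.ne'] at h
  simp only [Finset.sum_range_one, mul_zero, zero_add, pow_one, Nat.cast_zero, div_one] at h
  rw [div_eq_mul_inv]
  linarith

lemma log_add_one_sub_log_le {a : ℝ} (ha : 0 < a) :
    log (a + 1) - log a ≤ (2 * a + 1) / (2 * a * (a + 1)) := by
  have h := log_div_le_sum_range_add (x := (2 * a + 1)⁻¹) (by positivity)
    (inv_lt_one_of_one_lt₀ (by linarith)) 0
  rw [one_add_inv_div_one_sub_inv ha, log_div (by positivity) ha.ne'] at h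
  have h1 : 1 - ((2 * a + 1)⁻¹) ^ 2 = 4 * a * (a + 1) / (2 * a + 1) ^ 2 := by
    field_simp
    ring
  simp only [Finset.range_zero, Finset.sum_empty, zero_add, mul_zero, pow_one, h1] at h
  have h2 : (2 * a + 1)⁻¹ / (4 * a * (a + 1) / (2 * a + 1) ^ 2) =
      1 / 2 * ((2 * a + 1) / (2 * a * (a + 1))) := by
    field_simp
    ring
  linarith

lemma log_add_one_sub_log_sq_lt {r : ℝ} (hr : 1 < r) :
    (log (r + 1) - log r) ^ 2 < (log (r + 2) - log (r + 1)) * (log r - log (r - 1)) := by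
  have hb := two_div_le_log_add_one_sub_log (a := r + 1) (by linarith)
  have hc := two_div_le_log_add_one_sub_log (a := r - 1) (by linarith)
  rw [add_assoc, one_add_one_eq_two] at hb
  rw [sub_add_cancel] at hc
  calc (log (r + 1) - log r) ^ 2
      ≤ ((2 * r + 1) / (2 * r * (r + 1))) ^ 2 := by
        gcongr
        · exact sub_nonneg.2 (log_le_log (by linarith) (by linarith))
        · exact log_add_one_sub_log_le (by linarith)
    _ < 2 / (2 * (r + 1) + 1) * (2 / (2 * (r - 1) + 1)) := by
        rw [div_pow, div_mul_div_comm, div_lt_div_iff₀ (by positivity) (by nlinarith)]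
        nlinarith
    _ ≤ (log (r + 2) - log (r + 1)) * (log r - log (r - 1)) := by
        gcongr
        exact (div_pos two_pos (by linarith)).le.trans hb

/-- The paper's `g`. -/
noncomputable def logGapRatio (r : ℝ) : ℝ :=
  (log r - log (r - 1)) / (log (r + 1) - log r)

lemma logGapRatio_add_one (r : ℝ) :
    logGapRatio (r + 1) = (log (r + 1) - log r) / (log (r + 2) - log (r + 1)) := by
  rw [logGapRatio, add_sub_cancel_right, add_assoc, one_add_one_eq_two]

lemma logGapRatio_add_one_lt {r : ℝ} (hr : 1 < r) : logGapRatio (r + 1) < logGapRatio r := by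
  have log_gap_pos : ∀ s > 0, 0 < log (s + 1) - log s := fun s hs =>
    sub_pos.2 (log_lt_log hs (lt_add_one s))
  have hb := log_gap_pos (r + 1) (by linarith)
  rw [add_assoc, one_add_one_eq_two] at hb
  have hc := log_gap_pos (r - 1) (by linarith)
  rw [sub_add_cancel] at hc
  rw [logGapRatio_add_one, logGapRatio, div_lt_div_iff₀ hb (log_gap_pos r (by linarith)), ← sq]
  linarith [log_add_one_sub_log_sq_lt hr]

lemma logGapRatio_le_of_two_le {x : ℕ} (hx : 2 ≤ x) : logGapRatio x ≤ logGapRatio 2 := by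
  have hanti : Antitone fun n : ℕ => logGapRatio (n + 2) := by
    refine antitone_nat_of_succ_le fun n => ?_
    have h := logGapRatio_add_one_lt (r := n + 2) (by norm_cast; omega)
    push_cast
    rw [add_right_comm]
    exact h.le
  obtain ⟨k, rfl⟩ := Nat.exists_eq_add_of_le' hx
  simpa using hanti (Nat.zero_le k)

lemma logGapRatio_two : logGapRatio 2 = (log 2 - log 1) / (log 3 - log 2) := by
  norm_num [logGapRatio]

lemma logGapRatio_two_lt_two : logGapRatio 2 < 2 := by
  have h23 : log 2 < log 3 := log_lt_log two_pos (by norm_num)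
  have h89 : log (2 ^ 3) < log (3 ^ 2) := log_lt_log (by norm_num) (by norm_num)
  rw [log_pow, log_pow, Nat.cast_ofNat, Nat.cast_ofNat] at h89
  rw [logGapRatio_two, log_one, sub_zero, div_lt_iff₀ (sub_pos.2 h23)]
  linarith

/-- `g(x) = (ln x − ln(x−1))/(ln(x+1) − ln x)` is strictly decreasing on
integers `x ≥ 2` and satisfies `g(x) ≤ g(2) < 2`. -/
theorem stmt6 :
    (∀ x : ℕ, 2 ≤ x →
      (Real.log ((x : ℝ) + 1) - Real.log (x : ℝ)) /
          (Real.log ((x : ℝ) + 2) - Real.log ((x : ℝ) + 1)) <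
        (Real.log (x : ℝ) - Real.log ((x : ℝ) - 1)) /
          (Real.log ((x : ℝ) + 1) - Real.log (x : ℝ))) ∧
    (∀ x : ℕ, 2 ≤ x →
      (Real.log (x : ℝ) - Real.log ((x : ℝ) - 1)) /
          (Real.log ((x : ℝ) + 1) - Real.log (x : ℝ)) ≤
        (Real.log (2 : ℝ) - Real.log (1 : ℝ)) /
          (Real.log (3 : ℝ) - Real.log (2 : ℝ))) ∧
    (Real.log (2 : ℝ) - Real.log (1 : ℝ)) /
        (Real.log (3 : ℝ) - Real.log (2 : ℝ)) < 2 := by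
  refine ⟨fun x hx => ?_, fun x hx => ?_, logGapRatio_two ▸ logGapRatio_two_lt_two⟩
  · rw [← logGapRatio_add_one]
    exact logGapRatio_add_one_lt (by exact_mod_cast hx)
  · exact logGapRatio_two ▸ logGapRatio_le_of_two_le hx
end

section
/- For integers n ≥ 3 and x ≥ 2: x − β − 1 > x·(x/(x+1))^(n-1) − β for any real β, i.e. x(1 − (x/(x+1))^(n-1)) > 1. -/
/-- All-pay auction without ties, `n ≥ 3` bidders, uniform values on
`{0,...,x}` with `x ≥ 2`: for any bid `β`, winning for sure beats the
equilibrium upper bound, i.e. `x − β − 1 > x·(x/(x+1))^(n-1) − β`. -/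
theorem stmt7 (n x : ℕ) (hn : 3 ≤ n) (hx : 2 ≤ x) (β : ℝ) :
    (x : ℝ) - β - 1 > (x : ℝ) * ((x : ℝ) / ((x : ℝ) + 1)) ^ (n - 1) - β := by
  have hx' : (2 : ℝ) ≤ (x : ℝ) := by exact_mod_cast hx
  set r : ℝ := (x : ℝ) / ((x : ℝ) + 1) with hr
  have hxpos : (0 : ℝ) < (x : ℝ) + 1 := by linarith
  have hr0 : 0 ≤ r := div_nonneg (by linarith) (by linarith)
  have hr1 : r ≤ 1 := by
    rw [hr, div_le_one hxpos]; linarith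
  have hle : r ^ (n - 1) ≤ r ^ 2 :=
    pow_le_pow_of_le_one hr0 hr1 (by omega)
  have key : (x : ℝ) * r ^ 2 < (x : ℝ) - 1 := by
    have h2 : (0:ℝ) < ((x:ℝ)+1)^2 := by positivity
    rw [hr, div_pow, ← mul_div_assoc, div_lt_iff₀ h2]
    nlinarith
  have : (x : ℝ) * r ^ (n - 1) ≤ (x : ℝ) * r ^ 2 :=
    mul_le_mul_of_nonneg_left hle (by linarith)
  linarith
end

section
/- In the two-bidder first-price auction with fair tie-breaking and uniform values on {0,...,x} with S = x+1: if in a symmetric equilibrium the bidding function jumps at v (β(v−1) = b − k with k ≥ 2, β(v) = b), m values bid exactly b, b = αv with α > 2 − √3, and v' = v + m − 1 is the largest value bidding b, then the equilibrium conditions (v−b)(v + m/2)/S ≥ (v−b+1)·v/S and (v'−b)(v'+1−m/2)/S ≥ (v'−b−1)(v'+1)/S are jointly inconsistent: the first gives m ≥ 2/(1−α), the second gives m ≤ 2(v'+1)/(v'−b), and 2/(1−α) > 2(v'+1)/(v'−b) given v' ≥ v + 2/(1−α) and α > 2−√3. -/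
/-- No-jumps lemma for the two-bidder first-price auction with fair
tie-breaking and uniform values, `S = x + 1`: if the symmetric equilibrium
bidding function jumps at `v`, `m ≥ 1` values bid exactly `b = αv` with
`α > 2 − √3`, and `v' = v + m − 1 ≥ v + 2/(1−α)` is the largest value bidding
`b`, then the two equilibrium conditions are jointly inconsistent. -/
theorem stmt17 (S v v' b m α : ℝ) (hS : 0 < S) (hv : 0 < v)
    (hα0 : 0 < α) (hα1 : α < 1) (hα : 2 - Real.sqrt 3 < α)
    (hb : b = α * v) (hm : 1 ≤ m) (hv' : v' = v + m - 1)
    (hvb' : 0 < v' - b) (hbig : v' ≥ v + 2 / (1 - α))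
    (h1 : (v - b) * (v + m / 2) / S ≥ (v - b + 1) * v / S)
    (h2 : (v' - b) * (v' + 1 - m / 2) / S ≥ (v' - b - 1) * (v' + 1) / S) :
    False := by
  have h1a : 1 - α > 0 := by linarith
  have h1' : (v - b + 1) * v ≤ (v - b) * (v + m / 2) :=
    (div_le_div_iff_of_pos_right hS).mp h1
  have h2' : (v' - b - 1) * (v' + 1) ≤ (v' - b) * (v' + 1 - m / 2) :=
    (div_le_div_iff_of_pos_right hS).mp h2
  -- from h1': m * (v - b) ≥ 2 * v, hence m * (1 - α) ≥ 2
  have hkey1 : m * (1 - α) ≥ 2 := by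
    have : m * (v - b) ≥ 2 * v := by nlinarith
    rw [hb] at this
    nlinarith
  -- from h2': m * (v' - b) ≤ 2 * (v' + 1)
  have hkey2 : m * (v' - b) ≤ 2 * (v' + 1) := by nlinarith
  -- from hbig : (v' - v) * (1 - α) ≥ 2
  have hkey3 : (v' - v) * (1 - α) ≥ 2 := by
    have h := hbig
    have : v' - v ≥ 2 / (1 - α) := by linarith
    calc (v' - v) * (1 - α) ≥ (2 / (1 - α)) * (1 - α) :=
          mul_le_mul_of_nonneg_right this (le_of_lt h1a)
      _ = 2 := by field_simp
  -- key algebraic fact: 2 * α > (1 - α)^2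
  have hs3 : Real.sqrt 3 ^ 2 = 3 := Real.sq_sqrt (by norm_num)
  have hkey4 : 2 * α > (1 - α) ^ 2 := by nlinarith [Real.sqrt_nonneg 3]
  -- combine
  rw [hb] at hkey2 hvb'
  nlinarith [mul_le_mul_of_nonneg_left hkey3 (by linarith : (0:ℝ) ≤ m),
    mul_pos (sub_pos.mpr (show α * v < v' by linarith)) h1a,
    mul_nonneg (sub_nonneg.mpr hm) h1a.le,
    mul_nonneg (by linarith : (0:ℝ) ≤ m * (1 - α) - 2) (by linarith : (0:ℝ) ≤ (v' - v) * (1 - α) - 2)]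
end
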